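/- arXiv:1704.08472 — 2 statements merged into one kernel-verified Lean document; each statement's English description precedes it below -/
import Mathlib

section
/- For every integer t ≥ 0 there exists a tree T on exactly (t³ + 6t² + 17t + 18)/6 vertices such that f(T) = t + 1. -/
open Finset

variable {V : Type*}

open scoped Classical in
/-- Degree of `v` in the subgraph of `G` induced on the vertex set `A`
(number of neighbours of `v` inside `A`). -/
noncomputable def degOn (G : SimpleGraph V) (A : Finset V) (v : V) : ℕ :=
  (A.filter fun w => G.Adj v w).card

/-- Maximum degree of the subgraph of `G` induced on `A`. -/
noncomputable def maxDegOn (G : SimpleGraph V) (A : Finset V) : ℕ :=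
  A.sup (degOn G A)

open scoped Classical in
/-- The subgraph of `G` induced on `A` has fewer than `k` vertices or at least `k`
vertices realising its maximum degree. -/
def equates (G : SimpleGraph V) (k : ℕ) (A : Finset V) : Prop :=
  A.card < k ∨ k ≤ (A.filter fun v => degOn G A v = maxDegOn G A).card

open scoped Classical in
/-- `f_k` of the subgraph of `G` induced on `A`: the minimum number of vertices of `A`
whose deletion leaves an induced subgraph with fewer than `k` vertices or with at
least `k` vertices realising its maximum degree. -/
noncomputable def fkOn (G : SimpleGraph V) (k : ℕ) (A : Finset V) : ℕ :=
  sInf {m | ∃ S, S ⊆ A ∧ S.card = m ∧ equates G k (A \ S)}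

/-- `f_k(G)`. -/
noncomputable def fk [Fintype V] (G : SimpleGraph V) (k : ℕ) : ℕ :=
  fkOn G k Finset.univ

/-- `diff` of the subgraph of `G` induced on `A`: the largest degree minus the
second-largest degree (with multiplicity) of this subgraph. -/
noncomputable def diffOn (G : SimpleGraph V) (A : Finset V) : ℕ :=
  maxDegOn G A - ((A.val.map (degOn G A)).erase (maxDegOn G A)).sup

/-- `diff(G) = d₁ - d₂`, the difference between the largest and second-largest
vertex degrees of `G`. -/
noncomputable def diffDeg [Fintype V] (G : SimpleGraph V) : ℕ :=
  diffOn G Finset.univ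

/-!
The tree is a caterpillar built from stars. Cover `{0, …, b_{t+1}}` by the blocks
`[b_s, b_{s+1}]`, `s ≤ t`, where `b = blockStart` and `b_{s+1} - b_s = d_s` with `d = hubDeg`:
`d_0 = 2` and `d_{s+1} = d_s + s + 2`. Join the second vertex `b_s + 1` of each block (its hub) to
all other vertices of the block; consecutive stars share the vertex `b_{s+1}`. Every edge joins a
hub to a non-hub, and hub `s` has degree `d_s`.

Deleting the vertex `0` and the hubs `1, …, t` leaves one edge and isolated vertices, so
`f ≤ t + 1`. Conversely, after at most `t` deletions let `i` be the largest surviving hub: the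
hubs above it used up `t - i` deletions, so hub `i` keeps degree at least `d_i - i ≥ i + 2`. That
beats every non-hub, whose neighbours are among the `i + 1` surviving hubs, and every hub `r < i`,
whose degree is at most `d_r ≤ d_i - i - 1`; so the maximum degree is attained only once.
-/

section DegOn

open scoped Classical

variable {V : Type*} {G : SimpleGraph V}

lemma degOn_le_card {A B : Finset V} {v : V} (h : ∀ w ∈ A, G.Adj v w → w ∈ B) :
    degOn G A v ≤ #B :=
  card_le_card fun w hw => by rw [mem_filter] at hw; exact h w hw.1 hw.2

lemma degOn_mono {A B : Finset V} (hAB : A ⊆ B) (v : V) : degOn G A v ≤ degOn G B v :=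
  card_le_card (filter_subset_filter _ hAB)

lemma degOn_le_degOn_add_card [Fintype V] {A B : Finset V} {v : V}
    (h : ∀ w ∉ A, G.Adj v w → w ∈ B) : degOn G univ v ≤ degOn G A v + #B := by
  refine (card_le_card fun w hw => ?_).trans (card_union_le _ B)
  rw [mem_filter] at hw
  by_cases hwA : w ∈ A
  · exact mem_union_left _ (mem_filter.mpr ⟨hwA, hw.2⟩)
  · exact mem_union_right _ (h w hwA hw.2)

lemma not_equates_two_of_forall_lt {A : Finset V} {v : V} (hA : 2 ≤ #A) (hv : v ∈ A)
    (hlt : ∀ w ∈ A, w ≠ v → degOn G A w < degOn G A v) : ¬ equates G 2 A := by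
  have hmax : maxDegOn G A = degOn G A v :=
    le_antisymm (Finset.sup_le fun w hw => by
      rcases eq_or_ne w v with rfl | hwv
      · exact le_rfl
      · exact (hlt w hw hwv).le) (le_sup hv)
  have hsingle : (A.filter fun w => degOn G A w = maxDegOn G A) ⊆ {v} := fun w hw => by
    rw [mem_filter, hmax] at hw
    rw [mem_singleton]
    by_contra hwv
    exact (hlt w hw.1 hwv).ne hw.2
  rintro (h | h) <;> have := card_le_card hsingle <;> simp at * <;> omega

lemma degOn_pos {A : Finset V} {v w : V} (hw : w ∈ A) (hadj : G.Adj v w) : 0 < degOn G A v :=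
  card_pos.mpr ⟨w, mem_filter.mpr ⟨hw, hadj⟩⟩

lemma equates_two_of_forall_le {A : Finset V} {v₁ v₂ : V} {d : ℕ} (hne : v₁ ≠ v₂)
    (h₁ : v₁ ∈ A) (h₂ : v₂ ∈ A) (hle : ∀ w ∈ A, degOn G A w ≤ d)
    (hd₁ : degOn G A v₁ = d) (hd₂ : degOn G A v₂ = d) : equates G 2 A := by
  have hmax : maxDegOn G A = d := le_antisymm (Finset.sup_le hle) (hd₁ ▸ le_sup h₁)
  right
  calc 2 = #{v₁, v₂} := (card_pair hne).symm
    _ ≤ _ := card_le_card fun w hw => by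
      rw [mem_filter, hmax]
      rcases mem_insert.mp hw with rfl | hw
      · exact ⟨h₁, hd₁⟩
      · rw [mem_singleton.mp hw]; exact ⟨h₂, hd₂⟩

lemma fk_eq_of_forall [Fintype V] {k m : ℕ}
    (hex : ∃ A : Finset V, equates G k A ∧ #A + m = Fintype.card V)
    (hmin : ∀ A : Finset V, equates G k A → #A + m ≤ Fintype.card V) : fk G k = m := by
  obtain ⟨A, hA, hcard⟩ := hex
  have hA' : equates G k (univ \ (univ \ A)) := by
    rwa [sdiff_sdiff_right_self, inf_eq_inter, univ_inter]
  have hcard' : #(univ \ A) = m := by rw [card_univ_sdiff]; omega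
  refine le_antisymm (Nat.sInf_le ⟨univ \ A, subset_univ _, hcard', hA'⟩)
    (le_csInf ⟨m, _, subset_univ _, hcard', hA'⟩ ?_)
  rintro _ ⟨S, -, rfl, hS⟩
  have h₁ := hmin _ hS
  have h₂ := card_le_univ S
  rw [card_univ_sdiff] at h₁
  omega

end DegOn

namespace SimpleGraph

variable {V : Type*} [LinearOrder V] [OrderBot V] [Finite V] {G : SimpleGraph V}

theorem isTree_of_existsUnique_lt_adj (h : ∀ v, v ≠ ⊥ → ∃! u, u < v ∧ G.Adj u v) :
    G.IsTree := by
  choose! p hp hpu using h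
  have hreach : ∀ v, G.Reachable ⊥ v := fun v => WellFoundedLT.induction v fun v ih => by
    by_cases hv : v = ⊥
    · exact hv ▸ Reachable.refl _
    · exact (ih _ (hp v hv).1).trans (hp v hv).2.reachable
  -- each edge is `s(p v, v)` for exactly one `v ≠ ⊥`, namely its larger endpoint
  have hedge : Function.Bijective fun v : {v // v ≠ ⊥} =>
      (⟨s(p v.1, v.1), (hp v.1 v.2).2⟩ : G.edgeSet) := by
    refine ⟨fun v w hvw => Subtype.ext ?_, ?_⟩
    · rcases Sym2.eq_iff.mp (congrArg Subtype.val hvw) with ⟨-, h⟩ | ⟨h₁, h₂⟩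
      · exact h
      · have hv := (hp v v.2).1
        have hw := (hp w w.2).1
        rw [h₁, h₂] at hv
        exact absurd hv (lt_asymm hw)
    · rintro ⟨e, he⟩
      induction e using Sym2.ind with
      | _ x y =>
        wlog hxy : x < y generalizing x y
        · obtain ⟨v, hv⟩ := this y x (G.adj_symm he)
            ((lt_or_gt_of_ne (G.ne_of_adj he)).resolve_left hxy)
          exact ⟨v, by simpa [Sym2.eq_swap] using hv⟩
        have hy : y ≠ ⊥ := (bot_le.trans_lt hxy).ne'
        exact ⟨⟨y, hy⟩, by simp [hpu y hy x ⟨hxy, he⟩]⟩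
  rw [isTree_iff_connected_and_card]
  refine ⟨⟨fun u v => (hreach u).symm.trans (hreach v)⟩, ?_⟩
  rw [← Nat.card_congr (Equiv.ofBijective _ hedge), ← Finite.card_option,
    Nat.card_congr (Equiv.optionSubtypeNe ⊥)]

end SimpleGraph

section Hubs

open scoped Classical

variable {V : Type*} {G : SimpleGraph V} {t : ℕ} {hub : Fin (t + 1) → V}

lemma exists_greatest_hub_mem [Fintype V] (hinj : Function.Injective hub) {A : Finset V}
    (hA : #Aᶜ ≤ t) :
    ∃ i, hub i ∈ A ∧ ∀ s, hub s ∈ A → s ≤ i := by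
  have hne : (univ.filter fun s => hub s ∈ A).Nonempty := by
    by_contra! hnone
    have : univ.image hub ⊆ Aᶜ := fun v hv => by
      obtain ⟨s, -, rfl⟩ := mem_image.mp hv
      exact mem_compl.mpr fun hs => (filter_eq_empty_iff.mp hnone) (mem_univ s) hs
    have := card_le_card this
    rw [card_image_of_injective _ hinj, card_univ, Fintype.card_fin] at this
    omega
  obtain ⟨i, hi, hmax⟩ := exists_max_image _ id hne
  exact ⟨i, (mem_filter.mp hi).2, fun s hs => hmax s (mem_filter.mpr ⟨mem_univ s, hs⟩)⟩

lemma card_compl_filter_not_mem_range_add_le [Fintype V] (hinj : Function.Injective hub)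
    {A : Finset V} {i : Fin (t + 1)} (hmax : ∀ s, hub s ∈ A → s ≤ i) :
    #(Aᶜ.filter (· ∉ Set.range hub)) + (t - i) ≤ #Aᶜ := by
  have hdisj : Disjoint (Aᶜ.filter (· ∉ Set.range hub)) ((Ioi i).image hub) :=
    disjoint_left.mpr fun v hv hv' => by
      obtain ⟨s, -, rfl⟩ := mem_image.mp hv'
      exact (mem_filter.mp hv).2 ⟨s, rfl⟩
  have hsub : Aᶜ.filter (· ∉ Set.range hub) ∪ (Ioi i).image hub ⊆ Aᶜ :=
    union_subset (filter_subset _ _) fun v hv => by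
      obtain ⟨s, hs, rfl⟩ := mem_image.mp hv
      exact mem_compl.mpr fun hsA => (mem_Ioi.mp hs).not_ge (hmax s hsA)
  have := card_le_card hsub
  rw [card_union_of_disjoint hdisj, card_image_of_injective _ hinj, Fin.card_Ioi] at this
  omega

theorem not_equates_two_of_hubs [Fintype V] (hinj : Function.Injective hub)
    (hbip : ∀ v w, G.Adj v w → (v ∈ Set.range hub ↔ w ∉ Set.range hub))
    (hgap : ∀ r i : Fin (t + 1), r < i → degOn G univ (hub r) + i + 1 ≤ degOn G univ (hub i))
    (hlarge : ∀ i : Fin (t + 1), 2 * i + 2 ≤ degOn G univ (hub i))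
    {A : Finset V} (h2 : 2 ≤ #A) (hA : Fintype.card V ≤ #A + t) : ¬ equates G 2 A := by
  have hcompl : #Aᶜ ≤ t := by rw [card_compl]; omega
  obtain ⟨i, hiA, himax⟩ := exists_greatest_hub_mem hinj hcompl
  -- the hubs above `i` are deleted, so at most `i` deletions are left for non-hubs
  have hdel := card_compl_filter_not_mem_range_add_le hinj himax
  have hdeg : degOn G univ (hub i) ≤ degOn G A (hub i) + i :=
    (degOn_le_degOn_add_card (B := Aᶜ.filter (· ∉ Set.range hub)) fun w hw hadj =>
      mem_filter.mpr ⟨mem_compl.mpr hw, (hbip _ _ hadj).mp ⟨i, rfl⟩⟩).trans (by omega)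
  refine not_equates_two_of_forall_lt h2 hiA fun w hw hwi => ?_
  by_cases hwhub : w ∈ Set.range hub
  · obtain ⟨r, rfl⟩ := hwhub
    have hri : r < i := (himax r hw).lt_of_ne fun h => hwi (h ▸ rfl)
    have := hgap r i hri
    have := degOn_mono (G := G) (subset_univ A) (hub r)
    omega
  · have hnon : degOn G A w ≤ i + 1 := by
      refine (degOn_le_card (B := (Iic i).image hub) fun u hu hadj => ?_).trans
        (card_image_le.trans (Fin.card_Iic i).le)
      obtain ⟨s, rfl⟩ := (hbip _ _ hadj.symm).mpr hwhub
      exact mem_image.mpr ⟨s, mem_Iic.mpr (himax s hu), rfl⟩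
    have := hlarge i
    omega

lemma degOn_le_one_of_hubs
    (hbip : ∀ v w, G.Adj v w → (v ∈ Set.range hub ↔ w ∉ Set.range hub)) {a b : V}
    (hnbhd : ∀ w, G.Adj (hub 0) w ↔ w = a ∨ w = b) {A : Finset V} (ha : a ∉ A)
    (hA : ∀ s, hub s ∈ A → s = 0) {w : V} (hw : w ∈ A) : degOn G A w ≤ 1 := by
  by_cases hwhub : w ∈ Set.range hub
  · obtain ⟨s, rfl⟩ := hwhub
    obtain rfl := hA s hw
    refine (degOn_le_card (B := {b}) fun u hu hadj => ?_).trans (card_singleton b).le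
    rcases (hnbhd u).mp hadj with rfl | rfl
    · exact absurd hu ha
    · exact mem_singleton_self u
  · refine (degOn_le_card (B := {hub 0}) fun u hu hadj => ?_).trans (card_singleton _).le
    obtain ⟨s, rfl⟩ := (hbip _ _ hadj.symm).mpr hwhub
    rw [hA s hu]
    exact mem_singleton_self _

theorem exists_equates_two_of_hubs [Fintype V] (hinj : Function.Injective hub)
    (hbip : ∀ v w, G.Adj v w → (v ∈ Set.range hub ↔ w ∉ Set.range hub)) {a b : V}
    (hab : a ≠ b) (hnbhd : ∀ w, G.Adj (hub 0) w ↔ w = a ∨ w = b) :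
    ∃ A : Finset V, equates G 2 A ∧ #A + (t + 1) = Fintype.card V := by
  have hnonhub : ∀ w, G.Adj (hub 0) w → w ∉ Set.range hub := fun _ h =>
    (hbip _ _ h).mp ⟨0, rfl⟩
  have hb := (hnbhd b).mpr (Or.inr rfl)
  set S := insert a ((Ioi 0).image hub)
  have hS : ∀ w, w ∈ S ↔ w = a ∨ ∃ s, s ≠ 0 ∧ hub s = w := by simp [S]
  have h0 : hub 0 ∈ Sᶜ := by
    rw [mem_compl, hS]
    rintro (h | ⟨s, hs, h⟩)
    · exact G.ne_of_adj ((hnbhd a).mpr (Or.inl rfl)) h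
    · exact hs (hinj h)
  have hbS : b ∈ Sᶜ := by
    rw [mem_compl, hS]
    rintro (h | ⟨s, -, rfl⟩)
    · exact hab h.symm
    · exact hnonhub _ hb ⟨s, rfl⟩
  have hle : ∀ w ∈ Sᶜ, degOn G Sᶜ w ≤ 1 :=
    fun _ => degOn_le_one_of_hubs hbip hnbhd (fun h => mem_compl.mp h (mem_insert_self a _))
      fun s hs => by_contra fun h => mem_compl.mp hs ((hS _).mpr (Or.inr ⟨s, h, rfl⟩))
  refine ⟨Sᶜ, equates_two_of_forall_le (G.ne_of_adj hb) h0 hbS hle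
    ((hle _ h0).antisymm (degOn_pos hbS hb)) ((hle _ hbS).antisymm (degOn_pos h0 hb.symm)), ?_⟩
  have hSc : #S = t + 1 := by
    have haS : a ∉ (Ioi 0).image hub := fun h =>
      hnonhub a ((hnbhd a).mpr (Or.inl rfl)) (by
        obtain ⟨s, -, hs⟩ := mem_image.mp h
        exact ⟨s, hs⟩)
    rw [card_insert_of_notMem haS, card_image_of_injective _ hinj, Fin.card_Ioi, Fin.val_zero]
    omega
  have := card_le_univ S
  rw [card_compl]
  omega

theorem fk_two_eq_of_hubs [Fintype V] (hinj : Function.Injective hub)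
    (hbip : ∀ v w, G.Adj v w → (v ∈ Set.range hub ↔ w ∉ Set.range hub))
    (hgap : ∀ r i : Fin (t + 1), r < i → degOn G univ (hub r) + i + 1 ≤ degOn G univ (hub i))
    (hlarge : ∀ i : Fin (t + 1), 2 * i + 2 ≤ degOn G univ (hub i)) {a b : V}
    (hab : a ≠ b) (hnbhd : ∀ w, G.Adj (hub 0) w ↔ w = a ∨ w = b) : fk G 2 = t + 1 := by
  have hcard : t + 2 ≤ Fintype.card V := by
    have hb : b ∉ univ.image hub := fun h =>
      (hbip _ _ ((hnbhd b).mpr (Or.inr rfl))).mp ⟨0, rfl⟩ (by simpa using h)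
    have := card_le_univ (insert b (univ.image hub))
    rw [card_insert_of_notMem hb, card_image_of_injective _ hinj, card_univ,
      Fintype.card_fin] at this
    omega
  refine fk_eq_of_forall (exists_equates_two_of_hubs hinj hbip hab hnbhd) fun A hA => ?_
  by_contra! h
  exact not_equates_two_of_hubs hinj hbip hgap hlarge (by omega) (by omega) hA

end Hubs

def hubDeg : ℕ → ℕ
  | 0 => 2
  | s + 1 => hubDeg s + s + 2

def blockStart : ℕ → ℕ
  | 0 => 0
  | s + 1 => blockStart s + hubDeg s

lemma two_mul_add_two_le_hubDeg (s : ℕ) : 2 * s + 2 ≤ hubDeg s := by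
  induction s with
  | zero => simp [hubDeg]
  | succ s ih => simp only [hubDeg]; omega

lemma hubDeg_add_le_of_lt {r i : ℕ} (h : r < i) : hubDeg r + i + 1 ≤ hubDeg i := by
  induction i with
  | zero => omega
  | succ i ih =>
    simp only [hubDeg]
    rcases (Nat.lt_succ_iff_lt_or_eq.mp h) with h | rfl
    · have := ih h; omega
    · omega

lemma blockStart_add_two_le (s : ℕ) : blockStart s + 2 ≤ blockStart (s + 1) := by
  have := two_mul_add_two_le_hubDeg s
  simp only [blockStart]
  omega

lemma blockStart_strictMono : StrictMono blockStart :=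
  strictMono_nat_of_lt_succ fun s => by have := blockStart_add_two_le s; omega

lemma six_mul_blockStart (s : ℕ) : 6 * blockStart s = s ^ 3 + 3 * s ^ 2 + 8 * s := by
  have hubDeg_eq : ∀ s, 2 * hubDeg s = s ^ 2 + 3 * s + 4 := fun s => by
    induction s with
    | zero => rfl
    | succ s ih => simp only [hubDeg]; linear_combination ih
  induction s with
  | zero => rfl
  | succ s ih => simp only [blockStart]; linear_combination ih + 3 * hubDeg_eq s

lemma exists_mem_block {v : ℕ} (hv : 0 < v) :
    ∃ s, blockStart s < v ∧ v ≤ blockStart (s + 1) := by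
  have hex : ∃ s, v ≤ blockStart (s + 1) :=
    ⟨v, (Nat.le_succ v).trans blockStart_strictMono.le_apply⟩
  refine ⟨Nat.find hex, ?_, Nat.find_spec hex⟩
  rcases h : Nat.find hex with _ | s
  · exact hv
  · exact not_le.mp (Nat.find_min hex (h ▸ s.lt_succ_self))

lemma eq_of_mem_block {r s v : ℕ} (hr : blockStart r < v ∧ v ≤ blockStart (r + 1))
    (hs : blockStart s < v ∧ v ≤ blockStart (s + 1)) : r = s := by
  by_contra hne
  rcases lt_or_gt_of_ne hne with h | h
  · have := blockStart_strictMono.monotone (show r + 1 ≤ s by omega); omega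
  · have := blockStart_strictMono.monotone (show s + 1 ≤ r by omega); omega

/-- The leaves of the star centred at the hub `blockStart s + 1`: the rest of its block. -/
def InStar (s v : ℕ) : Prop :=
  blockStart s ≤ v ∧ v ≤ blockStart (s + 1) ∧ v ≠ blockStart s + 1

lemma not_inStar_hub (r s : ℕ) : ¬ InStar r (blockStart s + 1) := by
  rintro ⟨h₁, h₂, h₃⟩
  rcases lt_trichotomy s r with h | rfl | h
  · have := blockStart_strictMono.monotone (show s + 1 ≤ r by omega)
    have := blockStart_add_two_le s
    omega
  · exact h₃ rfl
  · have := blockStart_strictMono.monotone (show r + 1 ≤ s by omega)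
    omega

def caterpillar : SimpleGraph ℕ :=
  SimpleGraph.fromRel fun u v => ∃ s, u = blockStart s + 1 ∧ InStar s v

namespace caterpillar

lemma adj_hub_iff {s w : ℕ} : caterpillar.Adj (blockStart s + 1) w ↔ InStar s w := by
  refine ⟨fun h => ?_, fun h => ?_⟩
  · rcases ((SimpleGraph.fromRel_adj _ _ _).mp h).2 with ⟨r, hr, hw⟩ | ⟨r, -, hs⟩
    · rwa [blockStart_strictMono.injective (Nat.succ_injective hr)]
    · exact absurd hs (not_inStar_hub r s)
  · exact (SimpleGraph.fromRel_adj _ _ _).mpr ⟨fun h' => h.2.2 h'.symm, Or.inl ⟨s, rfl, h⟩⟩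

lemma hub_iff_not_hub_of_adj {v w : ℕ} (h : caterpillar.Adj v w) :
    (∃ s, v = blockStart s + 1) ↔ ¬ ∃ s, w = blockStart s + 1 := by
  rcases ((SimpleGraph.fromRel_adj _ _ _).mp h).2 with ⟨s, rfl, hw⟩ | ⟨s, rfl, hv⟩
  · exact ⟨fun _ ⟨r, hr⟩ => not_inStar_hub s r (hr ▸ hw), fun _ => ⟨s, rfl⟩⟩
  · exact ⟨fun ⟨r, hr⟩ => (not_inStar_hub s r (hr ▸ hv)).elim,
      fun h => (h ⟨s, rfl⟩).elim⟩

lemma lt_adj_hub_iff {s u : ℕ} :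
    u < blockStart s + 1 ∧ caterpillar.Adj u (blockStart s + 1) ↔ u = blockStart s := by
  rw [caterpillar.adj_comm, adj_hub_iff, InStar]
  have := blockStart_add_two_le s
  omega

lemma lt_adj_iff_of_mem_block {s u v : ℕ} (h₁ : blockStart s + 1 < v)
    (h₂ : v ≤ blockStart (s + 1)) : u < v ∧ caterpillar.Adj u v ↔ u = blockStart s + 1 := by
  refine ⟨fun ⟨hu, hadj⟩ => ?_,
    fun hu => ⟨hu ▸ h₁, hu ▸ adj_hub_iff.mpr ⟨by omega, h₂, by omega⟩⟩⟩
  have hv : ¬ ∃ r, v = blockStart r + 1 := by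
    rintro ⟨r, rfl⟩
    exact not_inStar_hub s r ⟨by omega, h₂, by omega⟩
  obtain ⟨r, rfl⟩ := (hub_iff_not_hub_of_adj hadj).mpr hv
  obtain ⟨hr₁, hr₂, -⟩ := adj_hub_iff.mp hadj
  rw [eq_of_mem_block ⟨by omega, hr₂⟩ ⟨by omega, h₂⟩]

end caterpillar

/-- The caterpillar restricted to `{0, …, blockStart (t + 1)}`: the first `t + 1` stars. -/
def caterpillarTree (t : ℕ) : SimpleGraph (Fin (blockStart (t + 1) + 1)) :=
  caterpillar.comap Fin.val

def caterpillarHub (t : ℕ) (s : Fin (t + 1)) : Fin (blockStart (t + 1) + 1) :=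
  ⟨blockStart s + 1, Nat.succ_lt_succ (blockStart_strictMono s.isLt)⟩

lemma caterpillarHub_injective {t : ℕ} : Function.Injective (caterpillarHub t) := fun _ _ h =>
  Fin.ext (blockStart_strictMono.injective (Nat.succ_injective (congrArg Fin.val h)))

lemma mem_range_caterpillarHub {t : ℕ} {w : Fin (blockStart (t + 1) + 1)} :
    w ∈ Set.range (caterpillarHub t) ↔ ∃ s, w.val = blockStart s + 1 := by
  refine ⟨fun ⟨s, hs⟩ => ⟨s, hs ▸ rfl⟩, fun ⟨s, hs⟩ => ?_⟩
  have hst : s < t + 1 := blockStart_strictMono.lt_iff_lt.mp (by omega)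
  exact ⟨⟨s, hst⟩, Fin.ext hs.symm⟩

namespace caterpillarTree

variable {t : ℕ}

lemma isTree (t : ℕ) : (caterpillarTree t).IsTree := by
  refine SimpleGraph.isTree_of_existsUnique_lt_adj fun v hv => ?_
  have hv : 0 < v.val := Fin.pos_iff_ne_zero.mpr (by rwa [← bot_eq_zero])
  obtain ⟨k, hk⟩ : ∃ k, ∀ u, u < v.val ∧ caterpillar.Adj u v ↔ u = k := by
    obtain ⟨s, h₁, h₂⟩ := exists_mem_block hv
    by_cases hhub : v.val = blockStart s + 1
    · exact ⟨_, fun u => hhub ▸ caterpillar.lt_adj_hub_iff⟩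
    · exact ⟨_, fun u => caterpillar.lt_adj_iff_of_mem_block (by omega) h₂⟩
  have hkv : k < v.val := ((hk k).mpr rfl).1
  exact ⟨⟨k, by omega⟩, (hk k).mpr rfl, fun u hu => Fin.ext ((hk u).mp hu)⟩

lemma hub_iff_not_hub_of_adj {v w : Fin (blockStart (t + 1) + 1)}
    (h : (caterpillarTree t).Adj v w) :
    v ∈ Set.range (caterpillarHub t) ↔ w ∉ Set.range (caterpillarHub t) := by
  simpa only [mem_range_caterpillarHub] using caterpillar.hub_iff_not_hub_of_adj h

lemma adj_hub_iff {s : Fin (t + 1)} {w : Fin (blockStart (t + 1) + 1)} :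
    (caterpillarTree t).Adj (caterpillarHub t s) w ↔ InStar s w :=
  caterpillar.adj_hub_iff

lemma degOn_univ_hub (s : Fin (t + 1)) :
    degOn (caterpillarTree t) univ (caterpillarHub t s) = hubDeg s := by
  classical
  have hstar : (Iio (blockStart (t + 1) + 1)).filter (InStar s) =
      (Icc (blockStart s) (blockStart (s + 1))).erase (blockStart s + 1) := by
    have := blockStart_strictMono.monotone (show s.val + 1 ≤ t + 1 from s.isLt)
    ext v
    simp only [mem_filter, mem_Iio, mem_erase, mem_Icc, InStar]
    omega
  have hcard :
      #((Icc (blockStart s) (blockStart (s + 1))).erase (blockStart s + 1)) = hubDeg s := by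
    have := blockStart_add_two_le s
    rw [card_erase_of_mem (mem_Icc.mpr ⟨by omega, by omega⟩), Nat.card_Icc]
    simp only [blockStart]
    omega
  rw [← hcard, ← hstar, ← Fin.map_valEmbedding_univ, filter_map, card_map, degOn]
  exact congrArg card (filter_congr fun w _ => adj_hub_iff)

lemma adj_hub_zero_iff {w : Fin (blockStart (t + 1) + 1)} :
    (caterpillarTree t).Adj (caterpillarHub t 0) w ↔
      w = 0 ∨
        w = ⟨2, Nat.lt_succ_of_le (blockStart_strictMono.monotone (Nat.le_add_left 1 t))⟩ := by
  rw [adj_hub_iff, InStar, Fin.ext_iff, Fin.ext_iff]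
  change blockStart 0 ≤ w ∧ w ≤ blockStart 1 ∧ w.val ≠ blockStart 0 + 1 ↔
    w.val = 0 ∨ w.val = 2
  simp only [blockStart, hubDeg]
  omega

lemma fk_two (t : ℕ) : fk (caterpillarTree t) 2 = t + 1 :=
  fk_two_eq_of_hubs caterpillarHub_injective (fun _ _ h => hub_iff_not_hub_of_adj h)
    (fun r i hri => by
      rw [degOn_univ_hub, degOn_univ_hub]
      exact hubDeg_add_le_of_lt hri)
    (fun i => by rw [degOn_univ_hub]; exact two_mul_add_two_le_hubDeg i)
    (by simp [Fin.ext_iff]) fun _ => adj_hub_zero_iff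

end caterpillarTree

/-- For every `t ≥ 0` there is a tree `T` on exactly
`(t³ + 6t² + 17t + 18)/6` vertices with `f(T) = t + 1`. -/
theorem stmt14 (t : ℕ) :
    ∃ (n : ℕ) (T : SimpleGraph (Fin n)), T.Connected ∧ T.IsAcyclic ∧
      6 * n = t ^ 3 + 6 * t ^ 2 + 17 * t + 18 ∧ fk T 2 = t + 1 :=
  ⟨_, caterpillarTree t, (caterpillarTree.isTree t).connected,
    (caterpillarTree.isTree t).isAcyclic, by linear_combination six_mul_blockStart (t + 1),
    caterpillarTree.fk_two t⟩
end

section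
/- For every odd integer k ≥ 3 there exists a finite simple graph with maximum degree 2 on exactly 2k − 2 vertices that is not k-feasible (namely (k−1)/2 disjoint copies of the path P₄ on four vertices); and for every even integer k ≥ 4 there exists a finite simple graph with maximum degree 2 on exactly 2k − 3 vertices that is not k-feasible (namely (k−2)/2 disjoint copies of P₄ together with one isolated vertex). -/
/-! In every induced subgraph of `P₄` each degree value is taken by at most two vertices
(a finite check over the sixteen vertex subsets). Degrees in a disjoint union are computed
componentwise, so in every induced subgraph of `m · P₄` each degree, in particular the maximum
one, is attained by at most `2m` vertices, and an extra isolated vertex raises this to `2m + 1`.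
For `m = (k - 1) / 2`, resp. `m = (k - 2) / 2`, both bounds are `k - 1`. -/

open Finset

variable {V : Type*}

open scoped Classical in
/-- `G` is `k`-feasible: some induced subgraph `H` of `G` has at least `k` vertices
whose degree in `H` equals the maximum degree of `H`. -/
def kFeasible (G : SimpleGraph V) (k : ℕ) : Prop :=
  ∃ A : Finset V, k ≤ (A.filter fun v => degOn G A v = maxDegOn G A).card

/-- `m` disjoint copies of the path `P₄` on four vertices. -/
def pathFours (m : ℕ) : SimpleGraph (Fin m × Fin 4) :=
  SimpleGraph.fromRel fun x y => x.1 = y.1 ∧ (y.2 : ℕ) = (x.2 : ℕ) + 1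

/-- `m` disjoint copies of the path `P₄` together with one isolated vertex (`none`). -/
def pathFoursPlusOne (m : ℕ) : SimpleGraph (Option (Fin m × Fin 4)) :=
  SimpleGraph.fromRel fun x y =>
    ∃ a b, x = some a ∧ y = some b ∧ a.1 = b.1 ∧ (b.2 : ℕ) = (a.2 : ℕ) + 1

open SimpleGraph

section DegreeMultiplicity

variable {W ι : Type*}

theorem degOn_eq_card_filter (G : SimpleGraph V) [DecidableRel G.Adj] (A : Finset V) (v : V) :
    degOn G A v = #(A.filter (G.Adj v)) := by
  unfold degOn
  congr

def DegreeMultiplicityLE (G : SimpleGraph V) (c : ℕ) : Prop :=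
  ∀ (A : Finset V) (d : ℕ), #(A.filter fun v => degOn G A v = d) ≤ c

theorem not_kFeasible_of_degreeMultiplicityLE {G : SimpleGraph V} {c k : ℕ}
    (h : DegreeMultiplicityLE G c) (hk : c < k) : ¬ kFeasible G k :=
  fun ⟨A, hA⟩ => (h A _).not_gt (hk.trans_le hA)

theorem degOn_boxProd_bot (H : SimpleGraph W) (A : Finset (ι × W)) (i : ι) (a : W) :
    degOn ((⊥ : SimpleGraph ι) □ H) A (i, a)
      = degOn H (A.preimage (Prod.mk i) (Prod.mk_right_injective i).injOn) a := by
  unfold degOn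
  refine card_nbij' Prod.snd (Prod.mk i) ?_ ?_ ?_ ?_ <;>
    simp +contextual [boxProd_adj, Set.MapsTo, Set.LeftInvOn]

theorem DegreeMultiplicityLE.boxProd_bot [Fintype ι] {H : SimpleGraph W} {c : ℕ}
    (h : DegreeMultiplicityLE H c) :
    DegreeMultiplicityLE ((⊥ : SimpleGraph ι) □ H) (c * Fintype.card ι) := by
  classical
  intro A d
  rw [card_eq_sum_card_fiberwise (f := Prod.fst) (t := univ) (by simp)]
  calc _ ≤ ∑ _i : ι, c := sum_le_sum fun i _ => ?_
    _ = c * Fintype.card ι := by simp [mul_comm]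
  refine le_of_eq_of_le ?_ (h (A.preimage (Prod.mk i) (Prod.mk_right_injective i).injOn) d)
  refine card_nbij' Prod.snd (Prod.mk i) ?_ ?_ ?_ ?_ <;>
    grind [degOn_boxProd_bot, Set.MapsTo, Set.LeftInvOn, mem_preimage]

theorem maxDegOn_boxProd_bot_univ [Fintype ι] [Nonempty ι] [Fintype W] (H : SimpleGraph W) :
    maxDegOn ((⊥ : SimpleGraph ι) □ H) univ = maxDegOn H univ := by
  rw [maxDegOn, ← univ_product_univ, sup_product_left]
  simp only [degOn_boxProd_bot, univ_product_univ, preimage_univ]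
  exact sup_const univ_nonempty _

theorem degOn_map {f : V → W} (hf : Function.Injective f) (G : SimpleGraph V) (A : Finset W)
    (v : V) : degOn (G.map f) A (f v) = degOn G (A.preimage f hf.injOn) v := by
  unfold degOn
  symm
  refine card_nbij f (fun u hu => ?_) hf.injOn ?_
  · simp only [coe_filter, mem_preimage, Set.mem_ofPred_eq] at hu ⊢
    exact ⟨hu.1, map_adj' f G _ _ |>.2 ⟨hf.ne hu.2.ne, v, u, hu.2, rfl, rfl⟩⟩
  · rintro w hw
    simp only [coe_filter, map_adj', Set.mem_ofPred_eq] at hw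
    obtain ⟨hw, -, v', u, hvu, hv, rfl⟩ := hw
    obtain rfl := hf hv
    exact ⟨u, by simpa using ⟨hw, hvu⟩, rfl⟩

theorem degOn_map_some_none (G : SimpleGraph V) (A : Finset (Option V)) :
    degOn (G.map some) A none = 0 := by
  simp [degOn, map_adj']

theorem DegreeMultiplicityLE.map_some {G : SimpleGraph V} {c : ℕ}
    (h : DegreeMultiplicityLE G c) : DegreeMultiplicityLE (G.map some) (c + 1) := by
  classical
  intro A d
  set B := A.preimage some (Option.some_injective V).injOn
  calc #(A.filter fun v => degOn _ A v = d)
      ≤ #(insert none ((B.filter fun v => degOn G B v = d).map .some)) := by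
        refine card_le_card fun x hx => ?_
        obtain ⟨hxA, hxd⟩ := mem_filter.1 hx
        cases x with
        | none => exact mem_insert_self _ _
        | some v =>
          refine mem_insert_of_mem (mem_map_of_mem _ (mem_filter.2 ⟨mem_preimage.2 hxA, ?_⟩))
          rwa [← degOn_map (Option.some_injective V)]
    _ ≤ c + 1 := (card_insert_le _ _).trans (by simpa using h B d)

theorem maxDegOn_map_some_univ [Fintype V] (G : SimpleGraph V) :
    maxDegOn (G.map some) univ = maxDegOn G univ := by
  have hsome := Option.some_injective V
  apply le_antisymm
  · refine Finset.sup_le fun x _ => ?_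
    cases x with
    | none => simp [degOn_map_some_none]
    | some v =>
      rw [degOn_map hsome, preimage_univ]
      exact le_sup (mem_univ v)
  · refine Finset.sup_le fun v _ => ?_
    rw [← preimage_univ hsome.injOn, ← degOn_map hsome]
    exact le_sup (mem_univ _)

end DegreeMultiplicity

instance (n : ℕ) : DecidableRel (pathGraph n).Adj :=
  fun _ _ => decidable_of_iff _ pathGraph_adj.symm

theorem degreeMultiplicityLE_pathGraph_four : DegreeMultiplicityLE (pathGraph 4) 2 := by
  have key : ∀ S : Finset (Fin 4), ∀ a ∈ S, ∀ b ∈ S, ∀ c ∈ S, a ≠ b → a ≠ c → b ≠ c →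
      #(S.filter ((pathGraph 4).Adj a)) ≠ #(S.filter ((pathGraph 4).Adj b)) ∨
        #(S.filter ((pathGraph 4).Adj a)) ≠ #(S.filter ((pathGraph 4).Adj c)) := by
    decide
  intro S d
  by_contra! h
  obtain ⟨a, ha, b, hb, c, hc, hab, hac, hbc⟩ := two_lt_card.1 h
  simp only [mem_filter, degOn_eq_card_filter] at ha hb hc
  rcases key S a ha.1 b hb.1 c hc.1 hab hac hbc with h | h <;> omega

theorem maxDegOn_pathGraph_four : maxDegOn (pathGraph 4) univ = 2 := by
  rw [maxDegOn, funext (degOn_eq_card_filter (pathGraph 4) univ)]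
  decide

theorem pathFours_eq_boxProd (m : ℕ) :
    pathFours m = (⊥ : SimpleGraph (Fin m)) □ pathGraph 4 := by
  ext ⟨i, a⟩ ⟨j, b⟩
  simp only [pathFours, fromRel_adj, boxProd_adj, pathGraph_adj, bot_adj, ne_eq, Prod.mk.injEq,
    false_and, false_or, Fin.ext_iff]
  omega

theorem pathFoursPlusOne_eq_map (m : ℕ) : pathFoursPlusOne m = (pathFours m).map some := by
  ext (_ | x) (_ | y) <;> simp [pathFoursPlusOne, pathFours, fromRel_adj, map_adj']
  grind

theorem maxDegOn_pathFours {m : ℕ} (hm : 0 < m) : maxDegOn (pathFours m) univ = 2 := by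
  have : Nonempty (Fin m) := ⟨⟨0, hm⟩⟩
  rw [pathFours_eq_boxProd, maxDegOn_boxProd_bot_univ, maxDegOn_pathGraph_four]

theorem degreeMultiplicityLE_pathFours (m : ℕ) : DegreeMultiplicityLE (pathFours m) (2 * m) := by
  simpa [pathFours_eq_boxProd] using degreeMultiplicityLE_pathGraph_four.boxProd_bot (ι := Fin m)

theorem maxDegOn_pathFoursPlusOne {m : ℕ} (hm : 0 < m) :
    maxDegOn (pathFoursPlusOne m) univ = 2 := by
  rw [pathFoursPlusOne_eq_map, maxDegOn_map_some_univ, maxDegOn_pathFours hm]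

theorem degreeMultiplicityLE_pathFoursPlusOne (m : ℕ) :
    DegreeMultiplicityLE (pathFoursPlusOne m) (2 * m + 1) := by
  rw [pathFoursPlusOne_eq_map]
  exact (degreeMultiplicityLE_pathFours m).map_some

/-- For every odd `k ≥ 3`, the graph `((k-1)/2) · P₄` has maximum
degree `2`, exactly `2k - 2` vertices, and is not `k`-feasible; for every even `k ≥ 4`,
the graph `((k-2)/2) · P₄ ∪ K₁` has maximum degree `2`, exactly `2k - 3` vertices, and
is not `k`-feasible. -/
theorem stmt19 :
    (∀ (k : ℕ), 3 ≤ k → Odd k →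
      maxDegOn (pathFours ((k - 1) / 2)) Finset.univ = 2 ∧
      Fintype.card (Fin ((k - 1) / 2) × Fin 4) = 2 * k - 2 ∧
      ¬ kFeasible (pathFours ((k - 1) / 2)) k) ∧
    (∀ (k : ℕ), 4 ≤ k → Even k →
      maxDegOn (pathFoursPlusOne ((k - 2) / 2)) Finset.univ = 2 ∧
      Fintype.card (Option (Fin ((k - 2) / 2) × Fin 4)) = 2 * k - 3 ∧
      ¬ kFeasible (pathFoursPlusOne ((k - 2) / 2)) k) := by
  constructor
  · rintro k hk ⟨t, rfl⟩
    refine ⟨maxDegOn_pathFours (by omega), ?_,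
      not_kFeasible_of_degreeMultiplicityLE (degreeMultiplicityLE_pathFours _) (by omega)⟩
    simp only [Fintype.card_prod, Fintype.card_fin]
    omega
  · rintro k hk ⟨t, rfl⟩
    refine ⟨maxDegOn_pathFoursPlusOne (by omega), ?_,
      not_kFeasible_of_degreeMultiplicityLE (degreeMultiplicityLE_pathFoursPlusOne _) (by omega)⟩
    simp only [Fintype.card_option, Fintype.card_prod, Fintype.card_fin]
    omega
end
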